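/- arXiv:2501.06244 — 2 statements merged into one kernel-verified Lean document; each statement's English description precedes it below -/
import Mathlib

section
/- For any m×n real matrix C, at least one of the following holds: (a) there exists a mixed strategy y ∈ Δ_m with Σ_i c_{ij} y_i ≥ 0 for every column j = 1,…,n, or (b) there exists a mixed strategy z ∈ Δ_n with Σ_j c_{ij} z_j ≤ 0 for every row i = 1,…,m. -/
open scoped BigOperators

noncomputable section

/-- The standard probability simplex in `ℝ^m`. -/
def simplex (m : ℕ) : Set (Fin m → ℝ) := stdSimplex ℝ (Fin m)

/-- The bilinear payoff `yᵀ C z = ∑ i ∑ j c_{ij} y_i z_j`. -/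
def payoff {m n : ℕ} (C : Matrix (Fin m) (Fin n) ℝ) (y : Fin m → ℝ) (z : Fin n → ℝ) : ℝ :=
  ∑ i, ∑ j, C i j * y i * z j

/-- Lower value `max_{y ∈ Δ_m} min_{z ∈ Δ_n} yᵀ C z`. -/
def lowerValue {m n : ℕ} (C : Matrix (Fin m) (Fin n) ℝ) : ℝ :=
  ⨆ y : simplex m, ⨅ z : simplex n, payoff C y.1 z.1

/-- Upper value `min_{z ∈ Δ_n} max_{y ∈ Δ_m} yᵀ C z`. -/
def upperValue {m n : ℕ} (C : Matrix (Fin m) (Fin n) ℝ) : ℝ :=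
  ⨅ z : simplex n, ⨆ y : simplex m, payoff C y.1 z.1

/-- Theorem of the alternative for matrix games: for any `m × n` real matrix `C`, either there
is a mixed strategy `y ∈ Δ_m` with `∑ i, c_{ij} y_i ≥ 0` for every column `j`, or there is a
mixed strategy `z ∈ Δ_n` with `∑ j, c_{ij} z_j ≤ 0` for every row `i`. -/
theorem matrix_game_alternative {m n : ℕ} (hm : 0 < m) (hn : 0 < n)
    (C : Matrix (Fin m) (Fin n) ℝ) :
    (∃ y ∈ simplex m, ∀ j : Fin n, 0 ≤ ∑ i, C i j * y i) ∨
    (∃ z ∈ simplex n, ∀ i : Fin m, ∑ j, C i j * z j ≤ 0) := by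
  classical
  -- the vectors: columns of C and standard basis vectors
  set v : (Fin n ⊕ Fin m) → (Fin m → ℝ) :=
    Sum.elim (fun j => fun i => C i j) (fun i => Pi.single i (1 : ℝ)) with hv
  set S : Set (Fin m → ℝ) := convexHull ℝ (Set.range v) with hS
  by_cases h0 : (0 : Fin m → ℝ) ∈ S
  · -- case (b)
    right
    rw [hS, convexHull_range_eq_exists_affineCombination] at h0
    obtain ⟨s, w, hw0, hw1, hws⟩ := h0
    set w' : Fin n ⊕ Fin m → ℝ := fun k => if k ∈ s then w k else 0 with hw'
    have hw'0 : ∀ k, 0 ≤ w' k := by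
      intro k; simp only [hw']; split
      · exact hw0 _ ‹_›
      · exact le_refl 0
    have hw'1 : ∑ k, w' k = 1 := by
      rw [← hw1]
      rw [Finset.sum_ite_mem, Finset.univ_inter]
    have hrep : (0 : Fin m → ℝ) = ∑ k, w' k • v k := by
      rw [← hws, s.affineCombination_eq_linear_combination v w hw1]
      rw [← Finset.sum_subset (Finset.subset_univ s)]
      · exact Finset.sum_congr rfl fun k hk => by simp [hw', hk]
      · intro k _ hk; simp [hw', hk]
    have hcomp : ∀ i, (∑ j, w' (Sum.inl j) * C i j) + w' (Sum.inr i) = 0 := by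
      intro i
      have h := congrFun hrep i
      rw [Fintype.sum_sum_type] at h
      simp only [Pi.add_apply, Finset.sum_apply, Pi.smul_apply, smul_eq_mul, hv,
        Sum.elim_inl, Sum.elim_inr, Pi.zero_apply, Pi.single_apply, mul_ite, mul_one,
        mul_zero, Finset.sum_ite_eq, Finset.sum_ite_eq', Finset.mem_univ, if_true] at h
      linarith [h]
    set T : ℝ := ∑ j, w' (Sum.inl j) with hT
    have hT0 : 0 ≤ T := Finset.sum_nonneg fun j _ => hw'0 _
    have hTpos : 0 < T := by
      rcases hT0.lt_or_eq with h | h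
      · exact h
      · exfalso
        have hz : ∀ j, w' (Sum.inl j) = 0 := by
          intro j
          have := Finset.sum_eq_zero_iff_of_nonneg (fun j _ => hw'0 (Sum.inl j)) |>.1 h.symm
          exact this j (Finset.mem_univ j)
        have hri : ∀ i, w' (Sum.inr i) = 0 := by
          intro i
          have := hcomp i
          rw [Finset.sum_congr rfl fun j _ => by rw [hz j, zero_mul]] at this
          simpa using this
        have : (1 : ℝ) = 0 := by
          rw [← hw'1, Fintype.sum_sum_type]
          simp [hz, hri]
        norm_num at this
    refine ⟨fun j => w' (Sum.inl j) / T, ⟨fun j => div_nonneg (hw'0 _) hT0, ?_⟩, ?_⟩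
    · rw [← Finset.sum_div, ← hT, div_self hTpos.ne']
    · intro i
      have := hcomp i
      have hle : ∑ j, C i j * w' (Sum.inl j) ≤ 0 := by
        rw [Finset.sum_congr rfl fun j _ => mul_comm (C i j) _]
        nlinarith [hw'0 (Sum.inr i)]
      calc ∑ j, C i j * (w' (Sum.inl j) / T)
          = (∑ j, C i j * w' (Sum.inl j)) / T := by
            rw [Finset.sum_div]; exact Finset.sum_congr rfl fun j _ => (mul_div_assoc _ _ _).symm
        _ ≤ 0 := div_nonpos_of_nonpos_of_nonneg hle hT0
  · -- case (a): separate 0 from S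
    left
    have hconv : Convex ℝ S := convex_convexHull ℝ _
    have hcl : IsClosed S := (Set.finite_range v).isClosed_convexHull (𝕜 := ℝ)
    obtain ⟨f, u, hfu, hu⟩ := geometric_hahn_banach_closed_point hconv hcl h0
    rw [map_zero] at hu
    have hneg : ∀ a ∈ S, f a < 0 := fun a ha => (hfu a ha).trans hu
    have hmem : ∀ k, v k ∈ S := fun k => subset_convexHull ℝ _ ⟨k, rfl⟩
    set y : Fin m → ℝ := fun i => -(f (Pi.single i 1)) with hy
    have hypos : ∀ i, 0 < y i := by
      intro i
      have := hneg _ (hmem (Sum.inr i))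
      simp only [hv, Sum.elim_inr] at this
      simpa [hy] using neg_pos.2 this
    set T : ℝ := ∑ i, y i with hT
    have : Nonempty (Fin m) := ⟨⟨0, hm⟩⟩
    have hTpos : 0 < T := Finset.sum_pos (fun i _ => hypos i) Finset.univ_nonempty
    have hf : ∀ x : Fin m → ℝ, f x = ∑ i, x i * f (Pi.single i 1) := by
      intro x
      have hx : x = ∑ i, x i • (Pi.single i 1 : Fin m → ℝ) := by
        ext j
        simp [Finset.sum_apply, Pi.single_apply]
      conv_lhs => rw [hx]
      rw [map_sum]
      exact Finset.sum_congr rfl fun i _ => by rw [map_smul, smul_eq_mul]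
    refine ⟨fun i => y i / T, ⟨fun i => div_nonneg (hypos i).le hTpos.le, ?_⟩, ?_⟩
    · rw [← Finset.sum_div, ← hT, div_self hTpos.ne']
    · intro j
      have hcol := hneg _ (hmem (Sum.inl j))
      simp only [hv, Sum.elim_inl] at hcol
      rw [hf] at hcol
      have : 0 ≤ ∑ i, C i j * y i := by
        have : ∑ i, C i j * y i = -(∑ i, C i j * f (Pi.single i 1)) := by
          rw [← Finset.sum_neg_distrib]
          exact Finset.sum_congr rfl fun i _ => by rw [hy]; ring
        rw [this]
        linarith
      have hsum : ∑ i, C i j * (y i / T) = (∑ i, C i j * y i) / T := by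
        rw [Finset.sum_div]
        exact Finset.sum_congr rfl fun i _ => (mul_div_assoc _ _ _).symm
      rw [hsum]
      exact div_nonneg this hTpos.le
end
end

section
/- Every finite two-player zero-sum matrix game has a minimax equilibrium in mixed strategies: for any m×n real matrix C, max_{y in Δ_m} min_{z in Δ_n} y^T C z = min_{z in Δ_n} max_{y in Δ_m} y^T C z. -/
open scoped BigOperators

noncomputable section

/-- Uniform distribution lies in the simplex. -/
lemma unif_mem_simplex {m : ℕ} (hm : 0 < m) :
    (fun _ : Fin m => (m : ℝ)⁻¹) ∈ simplex m := by
  constructor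
  · intro i; positivity
  · simp [Finset.sum_const]
    field_simp

/-- Any continuous linear functional on `Fin m → ℝ` is given by coordinates. -/
lemma clm_eq_sum {m : ℕ} (f : (Fin m → ℝ) →L[ℝ] ℝ) (x : Fin m → ℝ) :
    f x = ∑ i, x i * f (Pi.single i 1) := by
  have hx : x = ∑ i, x i • (Pi.single i (1 : ℝ) : Fin m → ℝ) := by
    funext k
    simp [Finset.sum_apply, Pi.single_apply, Finset.sum_ite_eq']
  conv_lhs => rw [hx]
  rw [map_sum]
  simp [smul_eq_mul]

/-- Theorem of the alternative for a matrix game. -/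
lemma alternative {m n : ℕ} (hm : 0 < m) (hn : 0 < n)
    (C : Matrix (Fin m) (Fin n) ℝ) :
    (∃ z ∈ simplex n, ∀ i, ∑ j, C i j * z j ≤ 0) ∨
    (∃ y ∈ simplex m, ∀ j, 0 < ∑ i, C i j * y i) := by
  classical
  set v : Fin m ⊕ Fin n → (Fin m → ℝ) :=
    Sum.elim (fun i => Pi.single i (1 : ℝ)) (fun j => fun i => C i j) with hv
  set K : Set (Fin m → ℝ) := convexHull ℝ (Set.range v) with hK
  have hKc : IsCompact K := (Set.finite_range v).isCompact_convexHull (𝕜 := ℝ)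
  by_cases h0 : (0 : Fin m → ℝ) ∈ K
  · -- decompose 0 as a convex combination
    left
    rw [hK, convexHull_range_eq_exists_affineCombination] at h0
    obtain ⟨s, w, hw0, hw1, hcomb⟩ := h0
    rw [Finset.affineCombination_eq_linear_combination s v w hw1] at hcomb
    set W : Fin m ⊕ Fin n → ℝ := fun k => if k ∈ s then w k else 0 with hW
    have hW0 : ∀ k, 0 ≤ W k := by
      intro k; simp only [hW]; split
      · exact hw0 _ ‹_›
      · exact le_refl 0
    have hW1 : ∑ k, W k = 1 := by
      simp only [hW, Finset.sum_ite_mem, Finset.univ_inter]; exact hw1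
    have hWcomb : ∑ k, W k • v k = 0 := by
      simp only [hW, ite_smul, zero_smul, Finset.sum_ite_mem, Finset.univ_inter]
      exact hcomb
    -- coordinatewise equation
    have hstar : ∀ i, W (Sum.inl i) + ∑ j, W (Sum.inr j) * C i j = 0 := by
      intro i
      have := congrFun hWcomb i
      simp only [Finset.sum_apply, Pi.smul_apply, smul_eq_mul, Pi.zero_apply] at this
      rw [Fintype.sum_sum_type] at this
      simpa [hv, Pi.single_apply, Finset.sum_ite_eq', mul_comm] using this
    set S : ℝ := ∑ j, W (Sum.inr j) with hS
    have hSnn : 0 ≤ S := Finset.sum_nonneg fun j _ => hW0 _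
    rcases eq_or_lt_of_le hSnn with hS0 | hSpos
    · -- S = 0 : contradiction
      exfalso
      have hz : ∀ j, W (Sum.inr j) = 0 := by
        intro j
        have := (Finset.sum_eq_zero_iff_of_nonneg (fun j _ => hW0 (Sum.inr j))).1 hS0.symm
        exact this j (Finset.mem_univ j)
      have hzi : ∀ i, W (Sum.inl i) = 0 := by
        intro i
        have := hstar i
        simp [hz] at this
        exact this
      rw [Fintype.sum_sum_type] at hW1
      simp [hz, hzi] at hW1
    · refine ⟨fun j => W (Sum.inr j) / S, ⟨fun j => div_nonneg (hW0 _) hSnn, ?_⟩, ?_⟩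
      · rw [← Finset.sum_div, ← hS, div_self hSpos.ne']
      · intro i
        have h := hstar i
        have : ∑ j, C i j * (W (Sum.inr j) / S) = (∑ j, W (Sum.inr j) * C i j) / S := by
          rw [Finset.sum_div]
          congr 1; funext j; ring
        rw [this]
        have : ∑ j, W (Sum.inr j) * C i j = -W (Sum.inl i) := by linarith
        rw [this]
        exact div_nonpos_of_nonpos_of_nonneg (neg_nonpos.2 (hW0 _)) hSnn
  · right
    obtain ⟨f, u, hfu, hb⟩ :=
      geometric_hahn_banach_point_closed (convex_convexHull ℝ _) hKc.isClosed h0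
    have hu : 0 < u := by simpa using hfu
    set y0 : Fin m → ℝ := fun i => f (Pi.single i 1) with hy0
    have hy0pos : ∀ i, 0 < y0 i := by
      intro i
      have : v (Sum.inl i) ∈ K := subset_convexHull ℝ _ (Set.mem_range_self _)
      have := hb _ this
      simp only [hv, Sum.elim_inl] at this
      exact hu.trans this
    set T : ℝ := ∑ i, y0 i with hT
    have hTpos : 0 < T := Finset.sum_pos (fun i _ => hy0pos i) (by
      simpa [Finset.univ_nonempty_iff] using Fin.pos_iff_nonempty.1 hm)
    refine ⟨fun i => y0 i / T, ⟨fun i => div_nonneg (hy0pos i).le hTpos.le, ?_⟩, ?_⟩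
    · rw [← Finset.sum_div, ← hT, div_self hTpos.ne']
    · intro j
      have hcol : v (Sum.inr j) ∈ K := subset_convexHull ℝ _ (Set.mem_range_self _)
      have hfc : 0 < f (v (Sum.inr j)) := hu.trans (hb _ hcol)
      have : f (v (Sum.inr j)) = ∑ i, C i j * y0 i := by
        rw [clm_eq_sum]
        simp [hv, hy0]
      rw [this] at hfc
      have : ∑ i, C i j * (y0 i / T) = (∑ i, C i j * y0 i) / T := by
        rw [Finset.sum_div]; congr 1; funext i; ring
      rw [this]
      exact div_pos hfc hTpos

set_option maxHeartbeats 1000000 in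
/-- Von Neumann's minimax theorem. -/
theorem minimax_theorem {m n : ℕ} (hm : 0 < m) (hn : 0 < n)
    (C : Matrix (Fin m) (Fin n) ℝ) :
    lowerValue C = upperValue C := by
  classical
  haveI hNm : Nonempty (simplex m) := ⟨⟨_, unif_mem_simplex hm⟩⟩
  haveI hNn : Nonempty (simplex n) := ⟨⟨_, unif_mem_simplex hn⟩⟩
  set B : ℝ := ∑ i, ∑ j, |C i j| with hB
  -- payoff bounds
  have hle1 : ∀ {k : ℕ} (x : Fin k → ℝ), x ∈ simplex k → ∀ i, x i ≤ 1 := by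
    intro k x hx i
    rw [← hx.2]
    exact Finset.single_le_sum (fun j _ => hx.1 j) (Finset.mem_univ i)
  have hbound : ∀ (y : simplex m) (z : simplex n), |payoff C y.1 z.1| ≤ B := by
    rintro ⟨y, hy⟩ ⟨z, hz⟩
    unfold payoff
    calc |∑ i, ∑ j, C i j * y i * z j| ≤ ∑ i, |∑ j, C i j * y i * z j| :=
          Finset.abs_sum_le_sum_abs _ _
      _ ≤ ∑ i, ∑ j, |C i j * y i * z j| :=
          Finset.sum_le_sum fun i _ => Finset.abs_sum_le_sum_abs _ _
      _ ≤ B := by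
          rw [hB]
          refine Finset.sum_le_sum fun i _ => Finset.sum_le_sum fun j _ => ?_
          rw [abs_mul, abs_mul, abs_of_nonneg (hy.1 i), abs_of_nonneg (hz.1 j)]
          have h1 := hle1 y hy i
          have h2 := hle1 z hz j
          have hyi := hy.1 i
          calc |C i j| * y i * z j ≤ |C i j| * y i * 1 :=
                mul_le_mul_of_nonneg_left h2 (mul_nonneg (abs_nonneg _) hyi)
            _ = |C i j| * y i := mul_one _
            _ ≤ |C i j| * 1 := mul_le_mul_of_nonneg_left h1 (abs_nonneg _)
            _ = |C i j| := mul_one _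
  have hub : ∀ (y : simplex m) (z : simplex n), payoff C y.1 z.1 ≤ B :=
    fun y z => (abs_le.1 (hbound y z)).2
  have hlb : ∀ (y : simplex m) (z : simplex n), -B ≤ payoff C y.1 z.1 :=
    fun y z => (abs_le.1 (hbound y z)).1
  set gInf : simplex m → ℝ := fun y => ⨅ z : simplex n, payoff C y.1 z.1 with hgInf
  set gSup : simplex n → ℝ := fun z => ⨆ y : simplex m, payoff C y.1 z.1 with hgSup
  have hInfBdd : ∀ y : simplex m, BddBelow (Set.range fun z : simplex n => payoff C y.1 z.1) :=
    fun y => ⟨-B, by rintro _ ⟨z, rfl⟩; exact hlb y z⟩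
  have hSupBdd : ∀ z : simplex n, BddAbove (Set.range fun y : simplex m => payoff C y.1 z.1) :=
    fun z => ⟨B, by rintro _ ⟨y, rfl⟩; exact hub y z⟩
  have hgInf_le : ∀ y, gInf y ≤ B := by
    intro y
    obtain ⟨z⟩ := hNn
    exact (ciInf_le (hInfBdd y) z).trans (hub y z)
  have hgSup_ge : ∀ z, -B ≤ gSup z := by
    intro z
    obtain ⟨y⟩ := hNm
    exact (hlb y z).trans (le_ciSup (hSupBdd z) y)
  have hgInfBdd : BddAbove (Set.range gInf) := ⟨B, by rintro _ ⟨y, rfl⟩; exact hgInf_le y⟩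
  have hgSupBdd : BddBelow (Set.range gSup) := ⟨-B, by rintro _ ⟨z, rfl⟩; exact hgSup_ge z⟩
  have hweak : lowerValue C ≤ upperValue C := by
    rw [lowerValue, upperValue]
    refine ciSup_le fun y => le_ciInf fun z => ?_
    exact (ciInf_le (hInfBdd y) z).trans (le_ciSup (hSupBdd z) y)
  refine le_antisymm hweak ?_
  by_contra hlt
  push_neg at hlt
  set t : ℝ := (lowerValue C + upperValue C) / 2 with ht
  have hlt1 : lowerValue C < t := by rw [ht]; linarith
  have hlt2 : t < upperValue C := by rw [ht]; linarith
  set C' : Matrix (Fin m) (Fin n) ℝ := fun i j => C i j - t with hC'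
  rcases alternative hm hn C' with ⟨z, hz, hA⟩ | ⟨y, hy, hB'⟩
  · -- upperValue ≤ t, contradiction with t < upperValue
    have hup : upperValue C ≤ t := by
      have hsup : gSup ⟨z, hz⟩ ≤ t := by
        refine ciSup_le fun y => ?_
        have hcol : ∀ i, ∑ j, C i j * z j ≤ t := by
          intro i
          have := hA i
          have hexp : ∑ j, C' i j * z j = (∑ j, C i j * z j) - t := by
            rw [hC']
            simp only [sub_mul, Finset.sum_sub_distrib]
            rw [← Finset.mul_sum, hz.2, mul_one]
          linarith [hexp ▸ this]
        have : payoff C y.1 z = ∑ i, y.1 i * ∑ j, C i j * z j := by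
          unfold payoff
          congr 1; funext i
          rw [Finset.mul_sum]
          congr 1; funext j; ring
        rw [this]
        calc ∑ i, y.1 i * ∑ j, C i j * z j ≤ ∑ i, y.1 i * t :=
              Finset.sum_le_sum fun i _ =>
                mul_le_mul_of_nonneg_left (hcol i) (y.2.1 i)
          _ = t := by rw [← Finset.sum_mul, y.2.2, one_mul]
      rw [upperValue]
      exact (ciInf_le hgSupBdd (⟨z, hz⟩ : simplex n)).trans hsup
    linarith
  · -- lowerValue ≥ t, contradiction with lowerValue < t
    have hlo : t ≤ lowerValue C := by
      have hinf : t ≤ gInf ⟨y, hy⟩ := by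
        refine le_ciInf fun z => ?_
        have hrow : ∀ j, t ≤ ∑ i, C i j * y i := by
          intro j
          have := hB' j
          have hexp : ∑ i, C' i j * y i = (∑ i, C i j * y i) - t := by
            rw [hC']
            simp only [sub_mul, Finset.sum_sub_distrib]
            rw [← Finset.mul_sum, hy.2, mul_one]
          linarith [hexp ▸ this]
        have : payoff C y z.1 = ∑ j, (∑ i, C i j * y i) * z.1 j := by
          unfold payoff
          rw [Finset.sum_comm]
          congr 1; funext j
          rw [Finset.sum_mul]
        rw [this]
        calc t = ∑ j, t * z.1 j := by rw [← Finset.mul_sum, z.2.2, mul_one]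
          _ ≤ ∑ j, (∑ i, C i j * y i) * z.1 j :=
              Finset.sum_le_sum fun j _ =>
                mul_le_mul_of_nonneg_right (hrow j) (z.2.1 j)
      rw [lowerValue]
      exact hinf.trans (le_ciSup hgInfBdd (⟨y, hy⟩ : simplex m))
    linarith
end
end
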